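/- arXiv:1704.03453 — 4 statements merged into one kernel-verified Lean document; each statement's English description precedes it below -/
import Mathlib

section
/- Let g be a nonzero vector in ℝ^d and α ∈ (0,1], and let k = min(⌊1/α²⌋, d). Then there exist k orthonormal vectors r₁, ..., r_k ∈ ℝ^d such that ⟪g, r_i⟫ ≥ α·‖g‖₂ for every i. -/
open scoped RealInnerProductSpace

theorem stmt_1 {d : ℕ} (g : EuclideanSpace ℝ (Fin d)) (hg : g ≠ 0)
    (α : ℝ) (hα : 0 < α) (hα1 : α ≤ 1)
    (k : ℕ) (hk : k = min ⌊1 / α ^ 2⌋₊ d) :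
    ∃ r : Fin k → EuclideanSpace ℝ (Fin d),
      Orthonormal ℝ r ∧ ∀ i, ⟪g, r i⟫ ≥ α * ‖g‖ := by
  have hd : 0 < d := by
    rcases Nat.eq_zero_or_pos d with h | h
    · subst h
      exact absurd (PiLp.ext fun i : Fin 0 => i.elim0) hg
    · exact h
  have hk1 : 1 ≤ k := by
    rw [hk]
    refine le_min ?_ hd
    rw [Nat.one_le_floor_iff]
    rw [le_div_iff₀ (by positivity)]
    nlinarith
  have hkpos : 0 < (k : ℝ) := by exact_mod_cast hk1
  have hkd : k ≤ d := hk ▸ min_le_right _ _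
  have hkα : (k : ℝ) ≤ 1 / α ^ 2 := by
    have h1 : k ≤ ⌊1 / α ^ 2⌋₊ := hk ▸ min_le_left _ _
    calc (k : ℝ) ≤ (⌊1 / α ^ 2⌋₊ : ℝ) := by exact_mod_cast h1
      _ ≤ 1 / α ^ 2 := Nat.floor_le (by positivity)
  -- the key scalar: c = 1/√k ≥ α
  set c : ℝ := (Real.sqrt k)⁻¹ with hc
  have hsk : 0 < Real.sqrt k := Real.sqrt_pos.mpr hkpos
  have hcα : α ≤ c := by
    have h2 : (α * Real.sqrt k) ^ 2 ≤ 1 := by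
      rw [mul_pow, Real.sq_sqrt hkpos.le]
      have hαk : α ^ 2 * (1 / α ^ 2) = 1 := by field_simp
      nlinarith [sq_nonneg α]
    have h1 : α * Real.sqrt k ≤ 1 := by nlinarith [mul_nonneg hα.le hsk.le]
    have h3 := mul_le_mul_of_nonneg_right h1 (inv_nonneg.mpr hsk.le)
    rwa [mul_assoc, mul_inv_cancel₀ (ne_of_gt hsk), mul_one, one_mul] at h3
  have hcpos : 0 < c := by positivity
  -- unit vector u = g / ‖g‖
  have hgn : (0:ℝ) < ‖g‖ := norm_pos_iff.mpr hg
  set u : EuclideanSpace ℝ (Fin d) := ‖g‖⁻¹ • g with hu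
  have hun : ‖u‖ = 1 := by
    rw [hu, norm_smul, norm_inv, norm_norm, inv_mul_cancel₀ (ne_of_gt hgn)]
  -- the vector z with k coordinates equal to c
  set z : EuclideanSpace ℝ (Fin d) := WithLp.toLp 2 (fun j : Fin d => if (j : ℕ) < k then c else 0) with hz
  have hzn : ‖z‖ = 1 := by
    rw [EuclideanSpace.norm_eq]
    have hsum : ∑ j : Fin d, ‖z j‖ ^ 2 = ∑ j : Fin d, (if (j : ℕ) < k then c ^ 2 else 0) := by
      apply Finset.sum_congr rfl
      intro j _
      by_cases h : (j : ℕ) < k <;> simp [hz, h, sq_abs, Real.norm_eq_abs]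
    rw [hsum, ← Finset.sum_filter]
    have hcard : (Finset.univ.filter (fun j : Fin d => (j : ℕ) < k)).card = k := by
      rw [show (Finset.univ.filter (fun j : Fin d => (j : ℕ) < k)) =
          Finset.map (Fin.castLEEmb hkd) Finset.univ by
        ext j
        simp only [Finset.mem_filter, Finset.mem_univ, true_and, Finset.mem_map,
          Fin.castLEEmb_apply]
        constructor
        · intro hj; exact ⟨⟨j, hj⟩, rfl⟩
        · rintro ⟨i, rfl⟩; exact i.2]
      simp
    rw [Finset.sum_const, hcard, nsmul_eq_mul]
    rw [hc, ← Real.sqrt_inv, Real.sq_sqrt (by positivity), mul_inv_cancel₀ (ne_of_gt hkpos),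
      Real.sqrt_one]
  -- orthonormal bases mapping u and z to the i₀-th basis vector
  have hcard : Module.finrank ℝ (EuclideanSpace ℝ (Fin d)) = Fintype.card (Fin d) := by simp
  set i₀ : Fin d := ⟨0, hd⟩
  have hbu : Orthonormal ℝ (({i₀} : Set (Fin d)).restrict (fun _ : Fin d => u)) := by
    rw [orthonormal_iff_ite]
    rintro ⟨i, hi⟩ ⟨j, hj⟩
    simp only [Set.mem_singleton_iff] at hi hj
    subst hi; subst hj
    rw [if_pos rfl]
    show ⟪u, u⟫ = 1
    rw [real_inner_self_eq_norm_sq, hun]; norm_num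
  have hbz : Orthonormal ℝ (({i₀} : Set (Fin d)).restrict (fun _ : Fin d => z)) := by
    rw [orthonormal_iff_ite]
    rintro ⟨i, hi⟩ ⟨j, hj⟩
    simp only [Set.mem_singleton_iff] at hi hj
    subst hi; subst hj
    rw [if_pos rfl]
    show ⟪z, z⟫ = 1
    rw [real_inner_self_eq_norm_sq, hzn]; norm_num
  obtain ⟨b, hb⟩ := hbu.exists_orthonormalBasis_extension_of_card_eq hcard
  obtain ⟨b', hb'⟩ := hbz.exists_orthonormalBasis_extension_of_card_eq hcard
  have hbu0 : b i₀ = u := hb i₀ rfl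
  have hbz0 : b' i₀ = z := hb' i₀ rfl
  set T : EuclideanSpace ℝ (Fin d) ≃ₗᵢ[ℝ] EuclideanSpace ℝ (Fin d) :=
    b.repr.trans b'.repr.symm with hT
  have hTu : T u = z := by
    rw [hT, ← hbu0, LinearIsometryEquiv.trans_apply, b.repr_self,
      ← b'.repr_self i₀, LinearIsometryEquiv.symm_apply_apply, hbz0]
  -- the family r
  set e : Fin d → EuclideanSpace ℝ (Fin d) := fun j => EuclideanSpace.single j 1 with he
  have hon : Orthonormal ℝ e := by
    have := (EuclideanSpace.basisFun (Fin d) ℝ).orthonormal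
    convert this using 1
    · rfl
    · funext j
      rw [he, EuclideanSpace.basisFun_apply]
  refine ⟨fun i => T.symm (e (Fin.castLE hkd i)), ?_, ?_⟩
  · exact ((hon.comp _ (Fin.castLE_injective hkd)).comp_linearIsometryEquiv T.symm)
  · intro i
    have hgu : g = ‖g‖ • u := by
      rw [hu, smul_smul, mul_inv_cancel₀ (ne_of_gt hgn), one_smul]
    have hinner : ⟪g, T.symm (e (Fin.castLE hkd i))⟫ = ‖g‖ * c := by
      have h1 : ⟪g, T.symm (e (Fin.castLE hkd i))⟫
          = ‖g‖ * ⟪u, T.symm (e (Fin.castLE hkd i))⟫ := by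
        conv_lhs => rw [hgu]
        rw [real_inner_smul_left]
      rw [h1]
      congr 1
      have h2 : ⟪u, T.symm (e (Fin.castLE hkd i))⟫
          = ⟪T u, T (T.symm (e (Fin.castLE hkd i)))⟫ := (T.inner_map_map _ _).symm
      rw [h2, T.apply_symm_apply, hTu, he]
      rw [EuclideanSpace.inner_single_right]
      simp only [RCLike.star_def, conj_trivial, one_mul]
      rw [hz]
      simp [i.2]
    rw [hinner]
    calc α * ‖g‖ ≤ c * ‖g‖ := by nlinarith
      _ = ‖g‖ * c := mul_comm _ _
end

section
/- Fix α ∈ (0,1] and a nonzero g ∈ ℝ^d. Suppose r₁, ..., r_k ∈ ℝ^d are pairwise orthogonal with ‖r_i‖₂ ≤ ε and ⟪g, r_i⟫ ≥ γ for all i, where ε > 0 and γ > 0. Then k ≤ ⌊ε²‖g‖₂²/γ²⌋. -/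
open scoped RealInnerProductSpace

theorem stmt_6 {d k : ℕ} (g : EuclideanSpace ℝ (Fin d)) (hg : g ≠ 0)
    (α : ℝ) (hα : 0 < α) (hα1 : α ≤ 1)
    (ε γ : ℝ) (hε : 0 < ε) (hγ : 0 < γ)
    (r : Fin k → EuclideanSpace ℝ (Fin d))
    (horth : ∀ i j, i ≠ j → ⟪r i, r j⟫ = 0)
    (hnorm : ∀ i, ‖r i‖ ≤ ε)
    (halign : ∀ i, ⟪g, r i⟫ ≥ γ) :
    k ≤ ⌊ε ^ 2 * ‖g‖ ^ 2 / γ ^ 2⌋₊ := by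
  have hr0 : ∀ i, r i ≠ 0 := by
    intro i h
    have := halign i
    rw [h, inner_zero_right] at this
    linarith
  have hrn : ∀ i, (0:ℝ) < ‖r i‖ := fun i => norm_pos_iff.mpr (hr0 i)
  set e : Fin k → EuclideanSpace ℝ (Fin d) := fun i => (‖r i‖)⁻¹ • r i with he
  have hON : Orthonormal ℝ e := by
    constructor
    · intro i
      simp [he, norm_smul, abs_of_nonneg (norm_nonneg _), inv_mul_cancel₀ (hrn i).ne']
    · intro i j hij
      simp [he, inner_smul_left, inner_smul_right, horth i j hij]
  have bessel := hON.sum_inner_products_le g (s := Finset.univ)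
  have hterm : ∀ i, γ ^ 2 / ε ^ 2 ≤ ‖⟪e i, g⟫‖ ^ 2 := by
    intro i
    have h1 : ⟪e i, g⟫ = (‖r i‖)⁻¹ * ⟪g, r i⟫ := by
      rw [he]; simp only [real_inner_smul_left]; rw [real_inner_comm]
    have h2 : γ / ε ≤ ⟪e i, g⟫ := by
      rw [h1]
      have : γ / ε ≤ ⟪g, r i⟫ / ‖r i‖ := by
        apply div_le_div₀ (le_trans (le_of_lt hγ) (halign i)) (halign i) (hrn i) (hnorm i)
      simpa [div_eq_inv_mul] using this
    have hge : (0:ℝ) ≤ γ / ε := le_of_lt (div_pos hγ hε)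
    calc γ ^ 2 / ε ^ 2 = (γ / ε) ^ 2 := by ring
      _ ≤ ⟪e i, g⟫ ^ 2 := by nlinarith
      _ ≤ ‖⟪e i, g⟫‖ ^ 2 := by rw [Real.norm_eq_abs, sq_abs]
  have hsum : (k : ℝ) * (γ ^ 2 / ε ^ 2) ≤ ‖g‖ ^ 2 := by
    calc (k : ℝ) * (γ ^ 2 / ε ^ 2)
        = ∑ _i : Fin k, γ ^ 2 / ε ^ 2 := by simp [mul_comm]
      _ ≤ ∑ i : Fin k, ‖⟪e i, g⟫‖ ^ 2 := Finset.sum_le_sum fun i _ => hterm i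
      _ ≤ ‖g‖ ^ 2 := bessel
  have hk : (k : ℝ) ≤ ε ^ 2 * ‖g‖ ^ 2 / γ ^ 2 := by
    rw [le_div_iff₀ (by positivity : (0:ℝ) < γ ^ 2)]
    have h2 : (0:ℝ) < ε ^ 2 := by positivity
    have h3 := mul_le_mul_of_nonneg_right hsum h2.le
    rw [mul_assoc, div_mul_cancel₀ _ h2.ne'] at h3
    nlinarith
  exact Nat.le_floor hk
end

section
/- Let g ∈ ℝ^d be nonzero, ε > 0, γ > 0, and suppose γ ≤ ε‖g‖₂. Let k = min(⌊ε²‖g‖₂²/γ²⌋, d). Then there exist pairwise orthogonal vectors r₁, ..., r_k with ‖r_i‖₂ = ε and ⟪g, r_i⟫ ≥ γ for every i. -/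
open scoped RealInnerProductSpace

theorem stmt_7 {d : ℕ} (g : EuclideanSpace ℝ (Fin d)) (hg : g ≠ 0)
    (ε γ : ℝ) (hε : 0 < ε) (hγ : 0 < γ) (hγε : γ ≤ ε * ‖g‖)
    (k : ℕ) (hk : k = min ⌊ε ^ 2 * ‖g‖ ^ 2 / γ ^ 2⌋₊ d) :
    ∃ r : Fin k → EuclideanSpace ℝ (Fin d),
      (∀ i j, i ≠ j → ⟪r i, r j⟫ = 0) ∧
      (∀ i, ‖r i‖ = ε) ∧
      (∀ i, ⟪g, r i⟫ ≥ γ) := by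
  rcases Nat.eq_zero_or_pos k with hk0 | hkpos
  · refine ⟨fun _ => 0, ?_, ?_, ?_⟩ <;> intro i <;> exact absurd i.isLt (by omega)
  have hkd : k ≤ d := hk ▸ min_le_right _ _
  have hd : 0 < d := lt_of_lt_of_le hkpos hkd
  have hgn : 0 < ‖g‖ := norm_pos_iff.mpr hg
  set u : EuclideanSpace ℝ (Fin d) := ‖g‖⁻¹ • g with hu_def
  have hu : ‖u‖ = 1 := by
    rw [hu_def, norm_smul, norm_inv, norm_norm, inv_mul_cancel₀ hgn.ne']
  -- orthonormal basis with first vector u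
  have card_eq : Module.finrank ℝ (EuclideanSpace ℝ (Fin d)) = Fintype.card (Fin d) := by
    simp
  have horth : Orthonormal ℝ (Set.restrict {(⟨0, hd⟩ : Fin d)} (fun _ => u)) :=
    ⟨fun _ => hu, fun {i j} hij => absurd (Subsingleton.elim i j) hij⟩
  obtain ⟨b, hb⟩ := horth.exists_orthonormalBasis_extension_of_card_eq card_eq
  have hb0 : b ⟨0, hd⟩ = u := hb _ rfl
  set c : Fin k → EuclideanSpace ℝ (Fin d) := fun i => b (Fin.castLE hkd i) with hc_def
  have hc : Orthonormal ℝ c :=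
    b.orthonormal.comp _ (Fin.castLE_injective hkd)
  have hc0 : c ⟨0, hkpos⟩ = u := hb0
  have hcij : ∀ i j, ⟪c i, c j⟫ = if i = j then 1 else 0 := fun i j =>
    orthonormal_iff_ite.mp hc i j
  set S : EuclideanSpace ℝ (Fin d) := ∑ i, c i with hS_def
  have hSc : ∀ j, ⟪S, c j⟫ = 1 := by
    intro j
    rw [hS_def, sum_inner]
    simp [hcij]
  set s : ℝ := Real.sqrt k with hs_def
  have hspos : 0 < s := Real.sqrt_pos.mpr (by exact_mod_cast hkpos)
  set w : EuclideanSpace ℝ (Fin d) := s⁻¹ • S with hw_def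
  have hwc : ∀ j, ⟪w, c j⟫ = s⁻¹ := by
    intro j
    rw [hw_def, real_inner_smul_left, hSc, mul_one]
  have hSS : ⟪S, S⟫ = (k : ℝ) := by
    rw [hS_def]
    rw [inner_sum]
    have : ∀ j : Fin k, ⟪(∑ i, c i : EuclideanSpace ℝ (Fin d)), c j⟫ = 1 := hSc
    simp only [← hS_def]
    simp [hSc]
  have hw : ‖w‖ = 1 := by
    have h1 : ‖w‖ ^ 2 = 1 := by
      rw [← real_inner_self_eq_norm_sq, hw_def, real_inner_smul_left,
        real_inner_smul_right, hSS, hs_def]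
      rw [← Real.sqrt_inv, ← Real.sqrt_mul_self (by positivity : (0:ℝ) ≤ (k:ℝ)⁻¹)]
      field_simp
      rw [Real.sq_sqrt (by positivity), ← one_div_pow, Real.sqrt_sq (by positivity)]
      exact mul_one_div_cancel (by exact_mod_cast hkpos.ne')
    nlinarith [norm_nonneg w]
  set T := Submodule.reflection (ℝ ∙ (u - w))ᗮ with hT_def
  have hTu : T u = w := Submodule.reflection_sub (hu.trans hw.symm)
  have hTT : ∀ x, T (T x) = x := fun x => Submodule.reflection_reflection _ x
  have hTinner : ∀ x y, ⟪T x, T y⟫ = ⟪x, y⟫ := fun x y =>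
    LinearIsometryEquiv.inner_map_map _ x y
  refine ⟨fun i => ε • T (c i), ?_, ?_, ?_⟩
  · intro i j hij
    rw [real_inner_smul_left, real_inner_smul_right, hTinner, hcij,
      if_neg hij, mul_zero, mul_zero]
  · intro i
    rw [norm_smul, T.norm_map, hc.1 i, mul_one, Real.norm_eq_abs, abs_of_pos hε]
  · intro i
    have hgu : g = ‖g‖ • u := by
      rw [hu_def, smul_smul, mul_inv_cancel₀ hgn.ne', one_smul]
    have key : ⟪g, ε • T (c i)⟫ = ‖g‖ * ε * s⁻¹ := by
      conv_lhs => rw [hgu]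
      rw [real_inner_smul_left, real_inner_smul_right]
      have : ⟪u, T (c i)⟫ = s⁻¹ := by
        calc ⟪u, T (c i)⟫ = ⟪T u, T (T (c i))⟫ := (hTinner _ _).symm
        _ = ⟪w, c i⟫ := by rw [hTu, hTT]
        _ = s⁻¹ := hwc i
      rw [this]; ring
    rw [key]
    -- now show γ ≤ ‖g‖ * ε * s⁻¹
    have hkfloor : k ≤ ⌊ε ^ 2 * ‖g‖ ^ 2 / γ ^ 2⌋₊ := hk ▸ min_le_left _ _
    have hkle : (k : ℝ) ≤ ε ^ 2 * ‖g‖ ^ 2 / γ ^ 2 :=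
      le_trans (by exact_mod_cast hkfloor) (Nat.floor_le (by positivity))
    have hsle : s ≤ ε * ‖g‖ / γ := by
      rw [hs_def]
      have : ε * ‖g‖ / γ = Real.sqrt (ε ^ 2 * ‖g‖ ^ 2 / γ ^ 2) := by
        rw [show ε ^ 2 * ‖g‖ ^ 2 / γ ^ 2 = (ε * ‖g‖ / γ) ^ 2 by ring]
        rw [Real.sqrt_sq (by positivity)]
      rw [this]
      exact Real.sqrt_le_sqrt hkle
    have hγs : γ * s ≤ ε * ‖g‖ := by
      calc γ * s ≤ γ * (ε * ‖g‖ / γ) := by nlinarith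
      _ = ε * ‖g‖ := by rw [mul_div_assoc']; exact mul_div_cancel_left₀ _ hγ.ne'
    rw [ge_iff_le]
    calc γ = γ * s * s⁻¹ := (mul_inv_cancel_right₀ hspos.ne' γ).symm
    _ ≤ ε * ‖g‖ * s⁻¹ := mul_le_mul_of_nonneg_right hγs (by positivity)
    _ = ‖g‖ * ε * s⁻¹ := by ring
end

section
/- Let J : ℝ^d → ℝ be differentiable at x with gradient g = ∇J(x) ≠ 0, and consider the first-order model J̃(x + r) = J(x) + ⟪g, r⟫. For ε > 0 and γ ∈ (0, ε‖g‖₂], any set of pairwise orthogonal perturbations r_i with ‖r_i‖₂ ≤ ε satisfying J̃(x + r_i) ≥ J(x) + γ for all i has size at most min(⌊ε²‖g‖₂²/γ²⌋, d), and a set of this size exists. -/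
open scoped RealInnerProductSpace

open Finset in
lemma aux_ortho_sum {n d : ℕ} (hnd : n ≤ d)
    (e : OrthonormalBasis (Fin d) ℝ (EuclideanSpace ℝ (Fin d))) (a b : Fin n → ℝ) :
    ⟪∑ m, a m • e (Fin.castLE hnd m), ∑ m, b m • e (Fin.castLE hnd m)⟫ = ∑ m, a m * b m := by
  rw [sum_inner]
  have he := orthonormal_iff_ite.mp e.orthonormal
  have : ∀ m : Fin n, ⟪a m • e (Fin.castLE hnd m), ∑ m', b m' • e (Fin.castLE hnd m')⟫
      = a m * b m := by
    intro m
    rw [inner_sum]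
    have : ∀ m' : Fin n, ⟪a m • e (Fin.castLE hnd m), b m' • e (Fin.castLE hnd m')⟫
        = if m' = m then a m * b m else 0 := by
      intro m'
      rw [real_inner_smul_left, real_inner_smul_right, he]
      by_cases h : m' = m
      · simp [h]
      · have : Fin.castLE hnd m ≠ Fin.castLE hnd m' := by
          simp [Fin.castLE_inj]; exact fun hh => h hh.symm
        simp [this, h]
    rw [Finset.sum_congr rfl fun m' _ => this m']
    simp
  rw [Finset.sum_congr rfl fun m _ => this m]

theorem stmt_8 {d : ℕ} (J : EuclideanSpace ℝ (Fin d) → ℝ)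
    (x : EuclideanSpace ℝ (Fin d)) (hJ : DifferentiableAt ℝ J x)
    (g : EuclideanSpace ℝ (Fin d)) (hg : g = gradient J x) (hg0 : g ≠ 0)
    (ε γ : ℝ) (hε : 0 < ε) (hγ : 0 < γ) (hγε : γ ≤ ε * ‖g‖) :
    (∀ k : ℕ, ∀ r : Fin k → EuclideanSpace ℝ (Fin d),
      (∀ i j, i ≠ j → ⟪r i, r j⟫ = 0) →
      (∀ i, ‖r i‖ ≤ ε) →
      (∀ i, J x + ⟪g, r i⟫ ≥ J x + γ) →
      k ≤ min ⌊ε ^ 2 * ‖g‖ ^ 2 / γ ^ 2⌋₊ d) ∧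
    (∃ r : Fin (min ⌊ε ^ 2 * ‖g‖ ^ 2 / γ ^ 2⌋₊ d) → EuclideanSpace ℝ (Fin d),
      (∀ i j, i ≠ j → ⟪r i, r j⟫ = 0) ∧
      (∀ i, ‖r i‖ ≤ ε) ∧
      (∀ i, J x + ⟪g, r i⟫ ≥ J x + γ)) := by
  have hgnorm : 0 < ‖g‖ := norm_pos_iff.mpr hg0
  constructor
  · -- upper bound
    intro k r horth hnorm hlin
    have hlin' : ∀ i, γ ≤ ⟪g, r i⟫ := fun i => by linarith [hlin i]
    have hrpos : ∀ i, 0 < ‖r i‖ := by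
      intro i
      rcases eq_or_ne (r i) 0 with h | h
      · exfalso; have := hlin' i; rw [h, inner_zero_right] at this; linarith
      · exact norm_pos_iff.mpr h
    set v : Fin k → EuclideanSpace ℝ (Fin d) := fun i => (‖r i‖)⁻¹ • r i with hv
    have hvon : Orthonormal ℝ v := by
      constructor
      · intro i
        rw [hv, norm_smul, norm_inv, norm_norm, inv_mul_cancel₀ (hrpos i).ne']
      · intro i j hij
        simp only [hv, real_inner_smul_left, real_inner_smul_right, horth i j hij, mul_zero]
    refine le_min ?_ ?_
    · -- Bessel
      rw [Nat.le_floor_iff (by positivity)]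
      have hbessel := hvon.sum_inner_products_le (s := Finset.univ) g
      have hterm : ∀ i, (γ / ε) ^ 2 ≤ ‖⟪v i, g⟫‖ ^ 2 := by
        intro i
        have h1 : γ / ε ≤ ⟪v i, g⟫ := by
          rw [hv]
          simp only [real_inner_smul_left]
          have h2 : γ ≤ ⟪r i, g⟫ := by rw [real_inner_comm]; exact hlin' i
          have h4 : γ / ε ≤ ⟪r i, g⟫ / ‖r i‖ :=
            div_le_div₀ (le_trans hγ.le h2) h2 (hrpos i) (hnorm i)
          calc γ / ε ≤ ⟪r i, g⟫ / ‖r i‖ := h4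
            _ = (‖r i‖)⁻¹ * ⟪r i, g⟫ := by rw [div_eq_inv_mul]
        have h0 : 0 < γ / ε := div_pos hγ hε
        calc (γ / ε) ^ 2 ≤ (⟪v i, g⟫) ^ 2 := by nlinarith
          _ ≤ ‖⟪v i, g⟫‖ ^ 2 := by rw [Real.norm_eq_abs, sq_abs]
      have hsum : (k : ℝ) * (γ / ε) ^ 2 ≤ ‖g‖ ^ 2 := by
        calc (k : ℝ) * (γ / ε) ^ 2 = ∑ _i : Fin k, (γ / ε) ^ 2 := by
              rw [Finset.sum_const, Finset.card_univ, Fintype.card_fin, nsmul_eq_mul]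
          _ ≤ ∑ i : Fin k, ‖⟪v i, g⟫‖ ^ 2 := Finset.sum_le_sum fun i _ => hterm i
          _ ≤ ‖g‖ ^ 2 := hbessel
      rw [div_pow] at hsum
      rw [le_div_iff₀ (by positivity)]
      calc (k:ℝ) * γ ^ 2 = ((k:ℝ) * (γ ^ 2 / ε ^ 2)) * ε ^ 2 := by
            field_simp
        _ ≤ ‖g‖ ^ 2 * ε ^ 2 := mul_le_mul_of_nonneg_right hsum (sq_nonneg ε)
        _ = ε ^ 2 * ‖g‖ ^ 2 := mul_comm _ _
    · -- k ≤ d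
      have hli := hvon.linearIndependent
      have := hli.fintype_card_le_finrank
      simpa [finrank_euclideanSpace] using this
  · -- existence
    set n := min ⌊ε ^ 2 * ‖g‖ ^ 2 / γ ^ 2⌋₊ d with hn
    rcases Nat.eq_zero_or_pos n with h0 | hpos
    · refine ⟨fun _ => 0, ?_, ?_, ?_⟩ <;> intro i <;>
        (exact absurd i.isLt (by omega))
    · have hnd : n ≤ d := min_le_right _ _
      have hnN : (n : ℝ) ≤ ε ^ 2 * ‖g‖ ^ 2 / γ ^ 2 := by
        calc (n:ℝ) ≤ (⌊ε ^ 2 * ‖g‖ ^ 2 / γ ^ 2⌋₊ : ℝ) := by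
              exact_mod_cast min_le_left _ _
          _ ≤ _ := Nat.floor_le (by positivity)
      have hd0 : 0 < d := lt_of_lt_of_le hpos hnd
      have hn0 : (0:ℝ) < (n:ℝ) := by exact_mod_cast hpos
      -- basis e with e 0 = ‖g‖⁻¹ • g
      have hu1 : Orthonormal ℝ (Set.restrict {(⟨0, hd0⟩ : Fin d)}
          (fun _ : Fin d => (‖g‖)⁻¹ • g)) := by
        constructor
        · intro i
          show ‖(‖g‖)⁻¹ • g‖ = 1
          rw [norm_smul, norm_inv, norm_norm, inv_mul_cancel₀ hgnorm.ne']
        · intro i j hij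
          exfalso
          exact hij (Subtype.ext (by
            have hi := i.2; have hj := j.2
            simp only [Set.mem_singleton_iff] at hi hj
            rw [hi, hj]))
      obtain ⟨e, he⟩ := hu1.exists_orthonormalBasis_extension_of_card_eq
        (by simp [finrank_euclideanSpace])
      have he0 : e ⟨0, hd0⟩ = (‖g‖)⁻¹ • g := he _ rfl
      have hge : g = ‖g‖ • e ⟨0, hd0⟩ := by
        rw [he0, smul_smul, mul_inv_cancel₀ hgnorm.ne', one_smul]
      -- basis w of ℝ^n with w 0 = (√n)⁻¹ constant vector
      set u : EuclideanSpace ℝ (Fin n) := WithLp.toLp 2 (fun _ => (Real.sqrt n)⁻¹) with hu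
      have hsqn : 0 < Real.sqrt n := Real.sqrt_pos.mpr hn0
      have hunorm : ‖u‖ = 1 := by
        rw [EuclideanSpace.norm_eq]
        have : ∀ i : Fin n, ‖u i‖ ^ 2 = (n : ℝ)⁻¹ := by
          intro i
          rw [hu]
          simp only [PiLp.toLp_apply, Real.norm_eq_abs, sq_abs]
          rw [← Real.sqrt_inv, Real.sq_sqrt (by positivity)]
        rw [Finset.sum_congr rfl fun i _ => this i]
        rw [Finset.sum_const, Finset.card_univ, Fintype.card_fin, nsmul_eq_mul,
          mul_inv_cancel₀ hn0.ne', Real.sqrt_one]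
      have hu2 : Orthonormal ℝ (Set.restrict {(⟨0, hpos⟩ : Fin n)}
          (fun _ : Fin n => u)) := by
        constructor
        · intro i; exact hunorm
        · intro i j hij
          exfalso
          exact hij (Subtype.ext (by
            have hi := i.2; have hj := j.2
            simp only [Set.mem_singleton_iff] at hi hj
            rw [hi, hj]))
      obtain ⟨w, hw⟩ := hu2.exists_orthonormalBasis_extension_of_card_eq
        (by simp [finrank_euclideanSpace])
      have hw0 : w ⟨0, hpos⟩ = u := hw _ rfl
      -- rows of w-coordinate matrix are orthonormal
      have hW : ∀ i j : Fin n, ∑ m, (w m) i * (w m) j = if i = j then (1:ℝ) else 0 := by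
        intro i j
        have := w.sum_inner_mul_inner (EuclideanSpace.single i (1:ℝ))
          (EuclideanSpace.single j (1:ℝ))
        rw [show ⟪EuclideanSpace.single i (1:ℝ), EuclideanSpace.single j (1:ℝ)⟫
            = if i = j then (1:ℝ) else 0 by
          rw [EuclideanSpace.inner_single_left]
          by_cases h : i = j
          · simp [h, EuclideanSpace.single_apply]
          · simp [h, EuclideanSpace.single_apply, Ne.symm h]] at this
        rw [← this]
        refine Finset.sum_congr rfl fun m _ => ?_
        rw [EuclideanSpace.inner_single_left, EuclideanSpace.inner_single_right]
        simp
      -- the construction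
      set r : Fin n → EuclideanSpace ℝ (Fin d) :=
        fun i => ε • ∑ m, ((w m) i) • e (Fin.castLE hnd m) with hr
      have hrinner : ∀ i j : Fin n, ⟪r i, r j⟫ = ε ^ 2 * (if i = j then (1:ℝ) else 0) := by
        intro i j
        rw [hr]
        simp only [real_inner_smul_left, real_inner_smul_right]
        rw [aux_ortho_sum hnd e, hW]
        ring
      refine ⟨r, ?_, ?_, ?_⟩
      · intro i j hij
        rw [hrinner i j, if_neg hij, mul_zero]
      · intro i
        have h2 : ‖r i‖ ^ 2 = ε ^ 2 := by
          rw [← real_inner_self_eq_norm_sq, hrinner i i, if_pos rfl, mul_one]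
        nlinarith [norm_nonneg (r i), sq_nonneg (‖r i‖ - ε)]
      · intro i
        have hge2 : ∀ m' : Fin d, ⟪g, e m'⟫ = if m' = ⟨0, hd0⟩ then ‖g‖ else 0 := by
          intro m'
          conv_lhs => rw [hge]
          rw [real_inner_smul_left]
          have he2 := orthonormal_iff_ite.mp e.orthonormal
          rw [he2]
          by_cases h : m' = ⟨0, hd0⟩
          · simp [h]
          · rw [if_neg h, if_neg (Ne.symm h), mul_zero]
        have hginner : ⟪g, r i⟫ = ε * ‖g‖ * (Real.sqrt n)⁻¹ := by
          rw [hr]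
          simp only [real_inner_smul_right, inner_sum]
          have hterm : ∀ m : Fin n, (w m) i * ⟪g, e (Fin.castLE hnd m)⟫
              = if m = ⟨0, hpos⟩ then (w m) i * ‖g‖ else 0 := by
            intro m
            rw [hge2]
            by_cases h : m = ⟨0, hpos⟩
            · have hc : Fin.castLE hnd m = ⟨0, hd0⟩ := by subst h; rfl
              rw [if_pos h, if_pos hc]
            · have hc : Fin.castLE hnd m ≠ (⟨0, hd0⟩ : Fin d) := by
                intro hc
                apply h
                apply Fin.ext
                simpa using congrArg Fin.val hc
              rw [if_neg hc, if_neg h, mul_zero]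
          rw [Finset.sum_congr rfl fun m _ => hterm m]
          rw [Finset.sum_ite_eq' Finset.univ (⟨0, hpos⟩ : Fin n)]
          simp only [Finset.mem_univ, if_true, hw0, hu, PiLp.toLp_apply]
          ring
        rw [hginner]
        have hkey : γ * Real.sqrt n ≤ ε * ‖g‖ := by
          have h1 : Real.sqrt n ≤ ε * ‖g‖ / γ := by
            rw [show ε * ‖g‖ / γ = Real.sqrt ((ε * ‖g‖ / γ)^2) by
              rw [Real.sqrt_sq (by positivity)]]
            apply Real.sqrt_le_sqrt
            calc (n:ℝ) ≤ ε ^ 2 * ‖g‖ ^ 2 / γ ^ 2 := hnN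
              _ = (ε * ‖g‖ / γ) ^ 2 := by field_simp
          calc γ * Real.sqrt n ≤ γ * (ε * ‖g‖ / γ) := by nlinarith
            _ = ε * ‖g‖ := by field_simp
        have : γ ≤ ε * ‖g‖ * (Real.sqrt n)⁻¹ := by
          rw [← div_eq_mul_inv, le_div_iff₀ hsqn]
          linarith
        linarith
end
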